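/- Cross-term equality in the MDR variance derivation: under common support, no direct effect, common embedding support, and model consistency, E_{p(x)π_b(a|x)p(e|x,a)}[ B(x)·w(x,a)·Δ(x,a) ] = E_{p(x)π_b(a|x)p(e|x,a)}[ B(x)·w(x,e)·Δ(x,a,e) ], where B(x) = ∑_{a'} π_e(a'|x) q̂(x,a'), Δ(x,a) = q(x,a) − q̂(x,a), Δ(x,a,e) = q(x,e) − q̂(x,e), and both expectations equal E_{p(x)π_e(a|x)}[ B(x)·Δ(x,a) ]. -/

import Mathlib

/-!
Both cross terms are changes of measure. In the DR term the weight `πe/πb` turns the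
`πb`-average over actions into a `πe`-average. In the MDR term one first sums the actions out,
so that the embedding is drawn from the marginal `pm πb`; the weight `pm πe / pm πb` turns
this into the marginal `pm πe`, and reinstating the actions under `πe` recovers `Δ(x,a)`,
because without a direct effect `Δ(x,a)` is the `p(e|x,a)`-average of `Δ(x,a,e)`.
The support conditions make the weights harmless where a denominator vanishes.
-/

open Finset

section ChangeOfMeasure

variable {ι K : Type*} [Fintype ι]

lemma eq_zero_of_pos_imp_pos [Zero K] [LinearOrder K] {a b : K} (ha : 0 ≤ a)
    (hab : 0 < a → 0 < b) (hb : b = 0) : a = 0 :=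
  le_antisymm (not_lt.1 fun h => (hab h).ne' hb) ha

lemma sum_mul_div_mul_of_imp [Semifield K] {μ ν : ι → K} (h : ∀ i, μ i = 0 → ν i = 0)
    (g : ι → K) :
    ∑ i, μ i * (ν i / μ i * g i) = ∑ i, ν i * g i :=
  sum_congr rfl fun i _ => by rw [← mul_assoc, mul_div_cancel_of_imp' (h i)]

end ChangeOfMeasure

section Marginal

variable {A E K : Type*} [Fintype A] [Fintype E]

lemma sum_mul_sum_mul_eq_sum_marginal_mul [Semiring K] (π : A → K) (k : A → E → K)
    (g : E → K) :
    ∑ a, π a * ∑ e, k a e * g e = ∑ e, (∑ a, π a * k a e) * g e := by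
  simp_rw [mul_sum, sum_mul, mul_assoc]
  exact sum_comm

lemma sum_mul_sum_mul_marginal_div_mul [Semifield K] [LinearOrder K] [IsStrictOrderedRing K]
    {πb πe : A → K} {k : A → E → K}
    (hπe : ∀ a, 0 ≤ πe a) (hk : ∀ a e, 0 ≤ k a e)
    (hsupport : ∀ e, 0 < ∑ a, πe a * k a e → 0 < ∑ a, πb a * k a e) (g : E → K) :
    ∑ a, πb a * ∑ e, k a e * ((∑ a', πe a' * k a' e) / (∑ a', πb a' * k a' e) * g e)
      = ∑ a, πe a * ∑ e, k a e * g e := by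
  have hnonneg : ∀ e, 0 ≤ ∑ a, πe a * k a e := fun e =>
    sum_nonneg fun a _ => mul_nonneg (hπe a) (hk a e)
  rw [sum_mul_sum_mul_eq_sum_marginal_mul, sum_mul_sum_mul_eq_sum_marginal_mul,
    sum_mul_div_mul_of_imp fun e => eq_zero_of_pos_imp_pos (hnonneg e) (hsupport e)]

end Marginal

theorem mdr_cross_term_equality_general {X A E : Type*} [Fintype X] [Fintype A] [Fintype E]
    (p : X → ℝ) (πb πe : X → A → ℝ) (pe : X → A → E → ℝ)
    (qe : X → E → ℝ) (qA : X → A → ℝ) (qhatE : X → E → ℝ) (qhatA : X → A → ℝ)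
    (pm : (X → A → ℝ) → X → E → ℝ)
    (hπe : ∀ x a, 0 ≤ πe x a)
    (hpe : ∀ x a e, 0 ≤ pe x a e) (hpesum : ∀ x a, ∑ e, pe x a e = 1)
    (hqA : ∀ x a, qA x a = ∑ e, pe x a e * qe x e)
    (hqhatA : ∀ x a, qhatA x a = ∑ e, pe x a e * qhatE x e)
    (hpm : ∀ π x e, pm π x e = ∑ a, π x a * pe x a e)
    (hsupport : ∀ x a, 0 < πe x a → 0 < πb x a)
    (hembsupport : ∀ x e, 0 < pm πe x e → 0 < pm πb x e) :
    (∑ x, p x * ∑ a, πb x a * ∑ e, pe x a e *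
        ((∑ a', πe x a' * qhatA x a') * (πe x a / πb x a) * (qA x a - qhatA x a))
      = ∑ x, p x * ∑ a, πb x a * ∑ e, pe x a e *
        ((∑ a', πe x a' * qhatA x a') * (pm πe x e / pm πb x e) * (qe x e - qhatE x e)))
    ∧ (∑ x, p x * ∑ a, πb x a * ∑ e, pe x a e *
        ((∑ a', πe x a' * qhatA x a') * (πe x a / πb x a) * (qA x a - qhatA x a))
      = ∑ x, p x * ∑ a, πe x a *
        ((∑ a', πe x a' * qhatA x a') * (qA x a - qhatA x a))) := by
  set B := fun x => ∑ a', πe x a' * qhatA x a'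
  have hDR : ∀ x, ∑ a, πb x a * ∑ e, pe x a e * (B x * (πe x a / πb x a) * (qA x a - qhatA x a))
      = ∑ a, πe x a * (B x * (qA x a - qhatA x a)) := fun x => calc
    _ = ∑ a, πb x a * (πe x a / πb x a * (B x * (qA x a - qhatA x a))) :=
      sum_congr rfl fun a _ => by rw [← sum_mul, hpesum, one_mul]; ring
    _ = _ := sum_mul_div_mul_of_imp
      (fun a => eq_zero_of_pos_imp_pos (hπe x a) (hsupport x a)) _
  have hMDR : ∀ x, ∑ a, πb x a * ∑ e, pe x a e * (B x * (pm πe x e / pm πb x e) *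
        (qe x e - qhatE x e)) = ∑ a, πe x a * (B x * (qA x a - qhatA x a)) := fun x => calc
    _ = ∑ a, πb x a * ∑ e, pe x a e * (pm πe x e / pm πb x e * (B x * (qe x e - qhatE x e))) :=
      sum_congr rfl fun a _ => congrArg _ (sum_congr rfl fun e _ => by ring)
    _ = ∑ a, πe x a * ∑ e, pe x a e * (B x * (qe x e - qhatE x e)) := by
      simp_rw [hpm] at hembsupport ⊢
      exact sum_mul_sum_mul_marginal_div_mul (hπe x) (hpe x) (hembsupport x) _
    _ = _ := sum_congr rfl fun a _ => by
      congr 1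
      rw [hqA, hqhatA, ← sum_sub_distrib, mul_sum]
      exact sum_congr rfl fun e _ => by ring
  exact ⟨sum_congr rfl fun x _ => by rw [hDR, hMDR],
    sum_congr rfl fun x _ => by rw [hDR]⟩

/-- Cross-term equality in the MDR variance derivation: the weighted cross terms of
DR and MDR coincide, both equaling the evaluation-policy expectation of `B(x)·Δ(x,a)`. -/
theorem mdr_cross_term_equality {X A E : Type*} [Fintype X] [Fintype A] [Fintype E]
    (p : X → ℝ) (πb πe : X → A → ℝ) (pe : X → A → E → ℝ)
    (qe : X → E → ℝ) (qA : X → A → ℝ) (qhatE : X → E → ℝ) (qhatA : X → A → ℝ)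
    (pm : (X → A → ℝ) → X → E → ℝ)
    (hp : ∀ x, 0 ≤ p x) (hpsum : ∑ x, p x = 1)
    (hπb : ∀ x a, 0 ≤ πb x a) (hπbsum : ∀ x, ∑ a, πb x a = 1)
    (hπe : ∀ x a, 0 ≤ πe x a) (hπesum : ∀ x, ∑ a, πe x a = 1)
    (hpe : ∀ x a e, 0 ≤ pe x a e) (hpesum : ∀ x a, ∑ e, pe x a e = 1)
    (hqA : ∀ x a, qA x a = ∑ e, pe x a e * qe x e)
    (hqhatA : ∀ x a, qhatA x a = ∑ e, pe x a e * qhatE x e)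
    (hpm : ∀ π x e, pm π x e = ∑ a, π x a * pe x a e)
    (hsupport : ∀ x a, 0 < πe x a → 0 < πb x a)
    (hembsupport : ∀ x e, 0 < pm πe x e → 0 < pm πb x e) :
    (∑ x, p x * ∑ a, πb x a * ∑ e, pe x a e *
        ((∑ a', πe x a' * qhatA x a') * (πe x a / πb x a) * (qA x a - qhatA x a))
      = ∑ x, p x * ∑ a, πb x a * ∑ e, pe x a e *
        ((∑ a', πe x a' * qhatA x a') * (pm πe x e / pm πb x e) * (qe x e - qhatE x e)))
    ∧ (∑ x, p x * ∑ a, πb x a * ∑ e, pe x a e *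
        ((∑ a', πe x a' * qhatA x a') * (πe x a / πb x a) * (qA x a - qhatA x a))
      = ∑ x, p x * ∑ a, πe x a *
        ((∑ a', πe x a' * qhatA x a') * (qA x a - qhatA x a))) :=
  mdr_cross_term_equality_general p πb πe pe qe qA qhatE qhatA pm hπe hpe hpesum hqA hqhatA hpm
    hsupport hembsupport
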